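/- Let G = ([n], E_G) and H = ([n], E_H) be simple graphs, and let θ ∈ ℝ with θ ∉ π·ℚ. Suppose exp(iθ·cut_G(s))·exp(−i(θ/2)|E_G|) = exp(iθ·cut_H(s))·exp(−i(θ/2)|E_H|) for all s ∈ {0,1}^n. Then cut_G(s) = cut_H(s) for all s, and hence E_G = E_H. -/
import Mathlib


/-- The number of edges of `G` cut by the bit assignment `s`. -/
def cutCount {n : ℕ} (G : SimpleGraph (Fin n)) [DecidableRel G.Adj]
    (s : Fin n → Bool) : ℕ :=
  (G.edgeFinset.filter fun e => s e.inf ≠ s e.sup).card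

private lemma core_count {n : ℕ} (a b i j : Fin n) (hab : a ≠ b) (hij : i ≠ j) :
    ((if decide (a = i) ≠ decide (b = i) then 1 else 0) +
      (if decide (a = j) ≠ decide (b = j) then 1 else 0) : ℕ) =
    (if decide (a = i ∨ a = j) ≠ decide (b = i ∨ b = j) then 1 else 0) +
      2 * (if s(a, b) = s(i, j) then 1 else 0) := by
  simp only [ne_eq, decide_eq_decide, Sym2.mk_eq_mk_iff, Prod.mk.injEq,
    Prod.swap_prod_mk]
  by_cases h1 : a = i <;> by_cases h2 : a = j <;> by_cases h3 : b = i <;>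
    by_cases h4 : b = j <;> simp_all

private lemma pointwise {n : ℕ} (i j : Fin n) (hij : i ≠ j) (e : Sym2 (Fin n))
    (he : ¬ e.IsDiag) :
    ((if (fun k => decide (k = i)) e.inf ≠ (fun k => decide (k = i)) e.sup then 1 else 0) +
      (if (fun k => decide (k = j)) e.inf ≠ (fun k => decide (k = j)) e.sup then 1 else 0) : ℕ) =
    (if (fun k => decide (k = i ∨ k = j)) e.inf ≠ (fun k => decide (k = i ∨ k = j)) e.sup
      then 1 else 0) + 2 * (if e = s(i, j) then 1 else 0) := by
  induction e using Sym2.ind with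
  | _ a b =>
    rw [Sym2.mk_isDiag_iff] at he
    rcases le_total a b with hab | hab
    · rw [show (s(a, b)).inf = a by simp [inf_eq_left.mpr hab],
        show (s(a, b)).sup = b by simp [sup_eq_right.mpr hab]]
      exact core_count a b i j he hij
    · rw [show (s(a, b)).inf = b by simp [inf_eq_right.mpr hab],
        show (s(a, b)).sup = a by simp [sup_eq_left.mpr hab],
        show s(a, b) = s(b, a) from Sym2.eq_swap]
      exact core_count b a i j (Ne.symm he) hij

private lemma cut_formula {n : ℕ} (G : SimpleGraph (Fin n)) [DecidableRel G.Adj]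
    (i j : Fin n) (hij : i ≠ j) :
    cutCount G (fun k => decide (k = i)) + cutCount G (fun k => decide (k = j)) =
      cutCount G (fun k => decide (k = i ∨ k = j)) +
        2 * (if G.Adj i j then 1 else 0) := by
  unfold cutCount
  rw [Finset.card_filter, Finset.card_filter, Finset.card_filter,
    ← Finset.sum_add_distrib]
  have hA : (if G.Adj i j then 1 else 0 : ℕ) =
      ∑ e ∈ G.edgeFinset, if e = s(i, j) then 1 else 0 := by
    rw [Finset.sum_ite_eq' G.edgeFinset (s(i, j)) (fun _ => 1)]
    simp [SimpleGraph.mem_edgeFinset, SimpleGraph.mem_edgeSet]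
  rw [hA, Finset.mul_sum, ← Finset.sum_add_distrib]
  refine Finset.sum_congr rfl fun e he => ?_
  exact pointwise i j hij e
    (G.not_isDiag_of_mem_edgeSet (SimpleGraph.mem_edgeFinset.mp he))

theorem phase_comparison_forces_equal_cuts {n : ℕ}
    (G H : SimpleGraph (Fin n)) [DecidableRel G.Adj] [DecidableRel H.Adj]
    (θ : ℝ) (hθ : Irrational (θ / Real.pi))
    (h : ∀ s : Fin n → Bool,
      Complex.exp (Complex.I * θ * (cutCount G s : ℂ)) *
        Complex.exp (-Complex.I * (θ / 2) * (G.edgeFinset.card : ℂ)) =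
      Complex.exp (Complex.I * θ * (cutCount H s : ℂ)) *
        Complex.exp (-Complex.I * (θ / 2) * (H.edgeFinset.card : ℂ))) :
    (∀ s, cutCount G s = cutCount H s) ∧ G = H := by
  have hπ : (Real.pi : ℝ) ≠ 0 := Real.pi_ne_zero
  have key : ∀ s : Fin n → Bool,
      2 * (cutCount G s : ℤ) - (G.edgeFinset.card : ℤ) =
        2 * (cutCount H s : ℤ) - (H.edgeFinset.card : ℤ) := by
    intro s
    have hs := h s
    rw [← Complex.exp_add, ← Complex.exp_add, Complex.exp_eq_exp_iff_exists_int] at hs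
    obtain ⟨t, ht⟩ := hs
    have h2 : Complex.I *
        ((θ * (cutCount G s) - θ / 2 * G.edgeFinset.card : ℝ) : ℂ) =
        Complex.I *
        ((θ * (cutCount H s) - θ / 2 * H.edgeFinset.card + t * (2 * Real.pi) : ℝ) : ℂ) := by
      push_cast
      linear_combination ht
    have hre : θ * (cutCount G s : ℝ) - θ / 2 * (G.edgeFinset.card : ℝ) =
        θ * (cutCount H s : ℝ) - θ / 2 * (H.edgeFinset.card : ℝ) + t * (2 * Real.pi) := by
      exact_mod_cast mul_left_cancel₀ Complex.I_ne_zero h2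
    set q : ℚ := 2 * (cutCount G s : ℚ) - (G.edgeFinset.card : ℚ) -
      (2 * (cutCount H s : ℚ) - (H.edgeFinset.card : ℚ)) with hq
    have hqR : ((q : ℝ)) = 2 * (cutCount G s : ℝ) - (G.edgeFinset.card : ℝ) -
        (2 * (cutCount H s : ℝ) - (H.edgeFinset.card : ℝ)) := by
      rw [hq]; push_cast; ring
    have hrel : θ * (q : ℝ) = 4 * Real.pi * t := by
      rw [hqR]; linear_combination 2 * hre
    have hq0 : q = 0 := by
      by_contra hq0
      apply hθ
      refine ⟨4 * t / q, ?_⟩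
      have hqR0 : ((q : ℝ)) ≠ 0 := by exact_mod_cast hq0
      push_cast
      rw [div_eq_div_iff hqR0 hπ]
      linear_combination -hrel
    have hq' : (2 * (cutCount G s : ℚ) - (G.edgeFinset.card : ℚ)) =
        2 * (cutCount H s : ℚ) - (H.edgeFinset.card : ℚ) := by
      have := hq ▸ hq0
      linarith [this]
    exact_mod_cast hq'
  have hzero : ∀ (G' : SimpleGraph (Fin n)) (_ : DecidableRel G'.Adj),
      cutCount G' (fun _ => false) = 0 := by
    intro G' inst
    unfold cutCount
    simp
  have hmk : (G.edgeFinset.card : ℤ) = (H.edgeFinset.card : ℤ) := by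
    have := key (fun _ => false)
    rw [hzero G _, hzero H _] at this
    omega
  have hcut : ∀ s, cutCount G s = cutCount H s := by
    intro s
    have := key s
    omega
  refine ⟨hcut, ?_⟩
  ext i j
  by_cases hij : i = j
  · subst hij; simp
  · have hG := cut_formula G i j hij
    have hH := cut_formula H i j hij
    rw [hcut, hcut, hcut] at hG
    by_cases hA : G.Adj i j <;> by_cases hB : H.Adj i j <;>
      simp only [hA, hB, if_true, if_false, iff_true, iff_false, true_iff, false_iff] at hG hH ⊢ <;>
      omega
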